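/- Let n, m ≥ 1 and let X be the quotient of (ℂᵐ∖{0}) × (ℂⁿ∖{0}) by the ℂ*-action a·(v, w) = (a⁻¹v, a w). The assignment [v, w] ↦ [w] is a well-defined continuous surjective map q : X → ℙ^{n−1}(ℂ), and for every point p ∈ ℙ^{n−1}(ℂ) the fiber q⁻¹(p) is homeomorphic to ℂᵐ∖{0}. -/

import Mathlib

/-- The nonzero vectors of `ℂᵏ`, with the subspace topology. -/
abbrev NZ (k : ℕ) : Type := {v : Fin k → ℂ // v ≠ 0}

/-- The orbit relation of the `ℂ*`-action `a • (v, w) = (a⁻¹ v, a w)` on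
`(ℂᵐ ∖ {0}) × (ℂⁿ ∖ {0})`. -/
def scalarRel (m n : ℕ) : (NZ m × NZ n) → (NZ m × NZ n) → Prop := fun p q =>
  ∃ a : ℂˣ, (q.1 : Fin m → ℂ) = ((a⁻¹ : ℂˣ) : ℂ) • (p.1 : Fin m → ℂ) ∧
    (q.2 : Fin n → ℂ) = (a : ℂ) • (p.2 : Fin n → ℂ)

noncomputable instance (K V : Type*) [DivisionRing K] [AddCommGroup V] [Module K V]
    [TopologicalSpace V] : TopologicalSpace (Projectivization K V) :=
  inferInstanceAs (TopologicalSpace (Quotient (projectivizationSetoid K V)))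

/-!
The class of `(v, w)` determines the line `[w]`, and every point of the fiber over `[w]` has a
representative with second coordinate exactly `w`, unique since the stabiliser of `w` in `ℂ*` is
trivial. Picking a coordinate `i` with `w i ≠ 0`, the continuous invariant
`[v', w'] ↦ (w' i / w i) • v'` recovers `v` from `[v, w]`, so `v ↦ [v, w]` is a homeomorphism
of `ℂᵐ ∖ {0}` onto the fiber.
-/

open scoped LinearAlgebra.Projectivization

namespace scalarRel

variable {m n : ℕ}

lemma mk_snd_eq {p q : NZ m × NZ n} (h : scalarRel m n p q) :
    Projectivization.mk ℂ (p.2 : Fin n → ℂ) p.2.2 =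
      Projectivization.mk ℂ (q.2 : Fin n → ℂ) q.2.2 := by
  obtain ⟨a, -, h2⟩ := h
  refine (Projectivization.mk_eq_mk_iff ℂ _ _ _ _).mpr ⟨a⁻¹, ?_⟩
  rw [h2, Units.smul_def, smul_smul, Units.inv_mul, one_smul]

lemma smul_fst_eq (w : Fin n → ℂ) (i : Fin n) {p q : NZ m × NZ n} (h : scalarRel m n p q) :
    ((p.2 : Fin n → ℂ) i / w i) • (p.1 : Fin m → ℂ) =
      ((q.2 : Fin n → ℂ) i / w i) • (q.1 : Fin m → ℂ) := by
  obtain ⟨a, h1, h2⟩ := h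
  rw [h1, h2, smul_smul, Pi.smul_apply, smul_eq_mul, mul_div_assoc, mul_right_comm,
    ← Units.val_mul, mul_inv_cancel, Units.val_one, one_mul]

end scalarRel

section Fibration

variable {m n : ℕ}

/-- The map `q : [v, w] ↦ [w]`. -/
noncomputable def bundleProjection (m n : ℕ) : Quot (scalarRel m n) → ℙ ℂ (Fin n → ℂ) :=
  Quot.lift (fun p => Projectivization.mk ℂ (p.2 : Fin n → ℂ) p.2.2) fun _ _ => scalarRel.mk_snd_eq

lemma continuous_bundleProjection : Continuous (bundleProjection m n) :=
  continuous_quot_lift _ (continuous_quotient_mk'.comp continuous_snd)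

lemma bundleProjection_surjective (hm : 0 < m) : Function.Surjective (bundleProjection m n) :=
  fun pt =>
    ⟨Quot.mk _ (⟨Pi.single ⟨0, hm⟩ 1, Pi.single_ne_zero_iff.mpr one_ne_zero⟩,
      ⟨pt.rep, pt.rep_nonzero⟩), pt.mk_rep⟩

lemma exists_eq_mk_of_bundleProjection_eq {x : Quot (scalarRel m n)} {w : NZ n}
    (hx : bundleProjection m n x = Projectivization.mk ℂ (w : Fin n → ℂ) w.2) :
    ∃ v : NZ m, x = Quot.mk _ (v, w) := by
  obtain ⟨⟨v, w'⟩, rfl⟩ := Quot.exists_rep x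
  obtain ⟨a, ha⟩ := (Projectivization.mk_eq_mk_iff ℂ _ _ _ _).mp hx
  refine ⟨⟨(a : ℂ) • (v : Fin m → ℂ), smul_ne_zero a.ne_zero v.2⟩,
    Quot.sound ⟨a⁻¹, ?_, ?_⟩⟩
  · simp
  · rw [← ha, Units.smul_def, smul_smul, Units.inv_mul, one_smul]

noncomputable def fiberCoord (w : Fin n → ℂ) (i : Fin n) : Quot (scalarRel m n) → (Fin m → ℂ) :=
  Quot.lift (fun p => ((p.2 : Fin n → ℂ) i / w i) • (p.1 : Fin m → ℂ))
    fun _ _ => scalarRel.smul_fst_eq w i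

lemma continuous_fiberCoord (w : Fin n → ℂ) (i : Fin n) :
    Continuous (fiberCoord (m := m) w i) :=
  continuous_quot_lift _ <|
    (((continuous_apply i).comp (continuous_subtype_val.comp continuous_snd)).div_const _).smul
      (continuous_subtype_val.comp continuous_fst)

lemma fiberCoord_mk {w : NZ n} {i : Fin n} (hi : (w : Fin n → ℂ) i ≠ 0) (v : NZ m) :
    fiberCoord (w : Fin n → ℂ) i (Quot.mk _ (v, w)) = v := by
  simp [fiberCoord, div_self hi]

lemma fiberCoord_ne_zero {w : NZ n} {i : Fin n} (hi : (w : Fin n → ℂ) i ≠ 0)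
    {x : Quot (scalarRel m n)}
    (hx : bundleProjection m n x = Projectivization.mk ℂ (w : Fin n → ℂ) w.2) :
    fiberCoord (w : Fin n → ℂ) i x ≠ 0 := by
  obtain ⟨v, rfl⟩ := exists_eq_mk_of_bundleProjection_eq hx
  rw [fiberCoord_mk hi]
  exact v.2

noncomputable def fiberHomeomorph (w : NZ n) {i : Fin n} (hi : (w : Fin n → ℂ) i ≠ 0) :
    (bundleProjection m n ⁻¹' {Projectivization.mk ℂ (w : Fin n → ℂ) w.2}) ≃ₜ NZ m where
  toFun x := ⟨fiberCoord (w : Fin n → ℂ) i x, fiberCoord_ne_zero hi x.2⟩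
  invFun v := ⟨Quot.mk _ (v, w), rfl⟩
  left_inv := by
    rintro ⟨x, hx⟩
    obtain ⟨v, rfl⟩ := exists_eq_mk_of_bundleProjection_eq hx
    simp only [fiberCoord_mk hi]
  right_inv v := Subtype.ext (fiberCoord_mk hi v)
  continuous_toFun :=
    ((continuous_fiberCoord _ i).comp continuous_subtype_val).subtype_mk _
  continuous_invFun :=
    ((continuous_quot_mk.comp (Continuous.prodMk_left _)).subtype_mk _)

lemma nonempty_homeomorph_fiber (pt : ℙ ℂ (Fin n → ℂ)) :
    Nonempty ((bundleProjection m n ⁻¹' {pt}) ≃ₜ NZ m) := by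
  obtain ⟨i, hi⟩ := Function.ne_iff.mp pt.rep_nonzero
  have fiber := fiberHomeomorph (m := m) ⟨pt.rep, pt.rep_nonzero⟩ hi
  rw [pt.mk_rep] at fiber
  exact ⟨fiber⟩

end Fibration

theorem fibration_over_projective_space (m n : ℕ) (hm : 1 ≤ m) :
    ∃ q : Quot (scalarRel m n) → Projectivization ℂ (Fin n → ℂ),
      Continuous q ∧ Function.Surjective q ∧
      (∀ p : NZ m × NZ n,
        q (Quot.mk _ p) = Projectivization.mk ℂ (p.2 : Fin n → ℂ) p.2.2) ∧
      (∀ pt : Projectivization ℂ (Fin n → ℂ),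
        Nonempty ((q ⁻¹' {pt} : Set (Quot (scalarRel m n))) ≃ₜ NZ m)) :=
  ⟨bundleProjection m n, continuous_bundleProjection, bundleProjection_surjective hm,
    fun _ => rfl, nonempty_homeomorph_fiber⟩
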